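/- Every finite claw-free cubic graph admits a (1,1,2,2)-packing coloring; that is, its vertex set can be partitioned into four sets A1, A2, B1, B2 where A1 and A2 are independent sets (1-packings) and B1 and B2 are 2-packings. -/

import Mathlib

def IsCubic {V : Type*} [Fintype V] (G : SimpleGraph V) [DecidableRel G.Adj] : Prop :=
  ∀ v : V, G.degree v = 3

def ClawFree {V : Type*} (G : SimpleGraph V) : Prop :=
  ¬ ∃ v a b c : V, G.Adj v a ∧ G.Adj v b ∧ G.Adj v c ∧
    ¬ G.Adj a b ∧ ¬ G.Adj a c ∧ ¬ G.Adj b c ∧ a ≠ b ∧ a ≠ c ∧ b ≠ c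

def IndepSet {V : Type*} (G : SimpleGraph V) (S : Set V) : Prop :=
  ∀ u ∈ S, ∀ v ∈ S, ¬ G.Adj u v

def TwoPacking {V : Type*} (G : SimpleGraph V) (S : Set V) : Prop :=
  ∀ u ∈ S, ∀ v ∈ S, u ≠ v → 2 < G.edist u v

/-!
Call the components of the graph formed by the edges lying on triangles the *cells* of `G`.
In a claw-free cubic graph two of the three neighbours of any vertex span a triangle with it,
so every vertex has at most one neighbour outside its cell; the cells are copies of `K₄`,
diamonds (`K₄` minus an edge) and triangles.

Colour the cells with two colours so that every cell with an outgoing edge has a neighbouring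
cell of the other colour (a maximum cut does this). Mark one *base* vertex in each cell, coloured
like its cell: an internal vertex of a `K₄` or a diamond, or a vertex of a triangle whose outside
neighbour lies in a cell of the other colour. In each `K₄` and in each diamond next to no base of
another cell, mark a second internal vertex with the opposite colour. Since bases only look
across a change of colour, equally coloured marked vertices are at distance at least three.

Every triangle contains a marked vertex. Hence, among the unmarked vertices, triangle edges and
the remaining edges alternate along any walk that does not turn back at a pendant vertex, which
rules out closed walks of odd length: the unmarked vertices split into two independent sets.
-/

section CubicNeighbours

variable {V : Type*} [Fintype V] {G : SimpleGraph V} [DecidableRel G.Adj] {v a b c : V}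

theorem IsCubic.eq_or_eq_or_eq (hG : IsCubic G) (ha : G.Adj v a) (hb : G.Adj v b)
    (hc : G.Adj v c) (hab : a ≠ b) (hac : a ≠ c) (hbc : b ≠ c) {w : V} (hw : G.Adj v w) :
    w = a ∨ w = b ∨ w = c := by
  classical
  have hsub : ({a, b, c} : Finset V) ⊆ G.neighborFinset v := by
    simp [Finset.insert_subset_iff, ha, hb, hc]
  have heq := Finset.eq_of_subset_of_card_le hsub (by rw [Finset.card_eq_three.2
    ⟨a, b, c, hab, hac, hbc, rfl⟩, G.card_neighborFinset_eq_degree, hG v])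
  simpa [← heq] using (G.mem_neighborFinset v w).2 hw

theorem IsCubic.exists_adj_ne (hG : IsCubic G) (v a b : V) :
    ∃ c, G.Adj v c ∧ c ≠ a ∧ c ≠ b := by
  classical
  obtain ⟨c, hc⟩ : (G.neighborFinset v \ {a, b}).Nonempty := by
    rw [← Finset.card_pos]
    have := Finset.card_le_card_sdiff_add_card (s := G.neighborFinset v) (t := {a, b})
    have := Finset.card_le_two (a := a) (b := b)
    have := hG v
    simp only [SimpleGraph.card_neighborFinset_eq_degree] at *
    omega
  simp only [Finset.mem_sdiff, SimpleGraph.mem_neighborFinset, Finset.mem_insert,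
    Finset.mem_singleton, not_or] at hc
  exact ⟨c, hc.1, hc.2.1, hc.2.2⟩

theorem IsCubic.eq_or_eq_of_adj_of_adj (hG : IsCubic G) {x u u' y z : V} (hu : G.Adj x u)
    (hu' : G.Adj x u') (huu' : u ≠ u') (hy : G.Adj x y) (hz : G.Adj x z) (hyz : y ≠ z) :
    y = u ∨ y = u' ∨ z = u ∨ z = u' := by
  obtain ⟨e, he, heu, heu'⟩ := hG.exists_adj_ne x u u'
  rcases hG.eq_or_eq_or_eq hu hu' he huu' heu.symm heu'.symm hy with rfl | rfl | rfl <;>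
    rcases hG.eq_or_eq_or_eq hu hu' he huu' heu.symm heu'.symm hz with rfl | rfl | rfl <;>
    simp_all

end CubicNeighbours

theorem ClawFree.adj_or_adj_or_adj {V : Type*} {G : SimpleGraph V} {v a b c : V}
    (hG : ClawFree G) (ha : G.Adj v a) (hb : G.Adj v b) (hc : G.Adj v c) (hab : a ≠ b)
    (hac : a ≠ c) (hbc : b ≠ c) : G.Adj a b ∨ G.Adj a c ∨ G.Adj b c := by
  by_contra! h
  exact hG ⟨v, a, b, c, ha, hb, hc, h.1, h.2.1, h.2.2, hab, hac, hbc⟩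

namespace SimpleGraph

section Alternating

variable {W : Type*} (H : SimpleGraph W) (R : W → W → Prop)

/-- At every vertex `y`, the labels `R` of the edges to two distinct neighbours differ, unless
one of these neighbours is pendant (walks can only turn back there). -/
def IsAlternatingOffLeaves : Prop :=
  ∀ x y z, H.Adj x y → H.Adj y z → x ≠ z → (∃ w, H.Adj w x ∧ w ≠ y) →
    (∃ w, H.Adj z w ∧ w ≠ y) → (R x y ↔ ¬ R y z)

variable {H R}

theorem adj_mod_succ {f : ℕ → W} {k : ℕ} (h : ∀ j < k, H.Adj (f j) (f (j + 1)))
    (hwrap : H.Adj (f k) (f 0)) (j : ℕ) : H.Adj (f (j % (k + 1))) (f ((j + 1) % (k + 1))) := by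
  rw [← Nat.mod_add_mod j (k + 1) 1]
  have hlt : j % (k + 1) < k + 1 := Nat.mod_lt j (by omega)
  rcases Nat.lt_or_eq_of_le (Nat.lt_succ_iff.1 hlt) with hj | hj
  · rw [Nat.mod_eq_of_lt (a := j % (k + 1) + 1) (by omega)]
    exact h _ hj
  · rw [hj, Nat.mod_self]
    exact hwrap

theorem IsAlternatingOffLeaves.false_of_odd_period (hR : H.IsAlternatingOffLeaves R) {n : ℕ}
    (hn : Odd n) {f : ℕ → W} (hf : ∀ i, H.Adj (f i) (f (i + 1)))
    (hper : Function.Periodic f n) : False := by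
  induction n using Nat.strong_induction_on generalizing f with
  | _ n ih =>
  obtain ⟨k, rfl⟩ : ∃ k, n = k + 1 := ⟨n - 1, by have := hn.pos; omega⟩
  by_cases hback : ∃ i, f (i + 2) = f i
  · -- cut out the backtrack and close the walk up again
    obtain ⟨i, hi⟩ := hback
    obtain ⟨m, rfl⟩ : ∃ m, k = m + 2 := by
      rcases hn with ⟨r, hr⟩
      rcases k with _ | _ | m
      · have h := hf 0
        rw [show (0 : ℕ) + 1 = 0 + (0 + 1) from rfl, hper] at h
        exact (H.irrefl h).elim
      · omega
      · exact ⟨m, rfl⟩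
    refine ih (m + 1) (by omega) (by rcases hn with ⟨r, hr⟩; exact ⟨r - 1, by omega⟩)
      (f := fun j => f (i + 2 + j % (m + 1))) (fun j => ?_) fun j => by simp
    refine adj_mod_succ (f := fun j => f (i + 2 + j)) (fun j _ => hf _) ?_ j
    have h := hf (i + 2 + m)
    rwa [show i + 2 + m + 1 = i + (m + 2 + 1) by omega, hper, ← hi] at h
  · push Not at hback
    have halt (i : ℕ) : R (f i) (f (i + 1)) ↔ ¬ R (f (i + 1)) (f (i + 1 + 1)) :=
      hR _ _ _ (hf i) (hf (i + 1)) (hback i).symm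
        ⟨f (i + k), by simpa [add_assoc, hper i] using hf (i + k), by
          simpa [show i + k + 2 = i + 1 + (k + 1) by omega, hper (i + 1)] using
            (hback (i + k)).symm⟩
        ⟨f (i + 3), hf (i + 2), hback (i + 1)⟩
    have hpar (i : ℕ) : R (f i) (f (i + 1)) ↔ (R (f 0) (f 1) ↔ Even i) := by
      induction i with
      | zero => simp
      | succ i ih => rw [Nat.even_add_one]; have := halt i; tauto
    have h0 : f (k + 1) = f 0 := by simpa using hper 0
    have h := hpar (k + 1)
    rw [show k + 1 + 1 = 1 + (k + 1) by omega, hper, h0] at h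
    exact Nat.not_even_iff_odd.2 hn (by tauto)

theorem IsAlternatingOffLeaves.colorable_two (hR : H.IsAlternatingOffLeaves R) :
    H.Colorable 2 := by
  refine two_colorable_iff_forall_loop_even.2 fun u p => Nat.not_odd_iff_even.1 fun hodd => ?_
  obtain ⟨k, hk⟩ : ∃ k, p.length = k + 1 := ⟨p.length - 1, by have := hodd.pos; omega⟩
  refine hR.false_of_odd_period hodd (f := fun i => p.getVert (i % p.length)) (fun i => ?_)
    fun i => by simp
  rw [hk]
  refine adj_mod_succ (fun j hj => p.adj_getVert_succ (i := j) (by omega)) ?_ i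
  have hlast := p.adj_getVert_succ (i := k) (by omega)
  rw [← hk, p.getVert_length] at hlast
  simpa [p.getVert_zero] using hlast

end Alternating

theorem exists_bool_forall_exists_adj_ne {W : Type*} [Finite W] (H : SimpleGraph W) :
    ∃ κ : W → Bool, ∀ v w, H.Adj v w → ∃ w', H.Adj v w' ∧ κ w' ≠ κ v := by
  classical
  let cut : (W → Bool) → Set (W × W) := fun κ => {e | H.Adj e.1 e.2 ∧ κ e.1 ≠ κ e.2}
  obtain ⟨κ, hκ⟩ := Finite.exists_max fun κ => (cut κ).ncard
  refine ⟨κ, fun v w hvw => ?_⟩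
  by_contra! hmono
  -- flipping the colour of `v` strictly enlarges the cut
  let κ' := Function.update κ v (!κ v)
  have hsub : cut κ ⊆ cut κ' := by
    rintro e ⟨he, hne⟩
    have h1 : e.1 ≠ v := fun h => hne (h ▸ (hmono e.2 (h ▸ he)).symm)
    have h2 : e.2 ≠ v := fun h => hne (h ▸ hmono e.1 (h ▸ he.symm))
    exact ⟨he, by simpa [κ', h1, h2] using hne⟩
  have hlt : cut κ ⊂ cut κ' :=
    (Set.ssubset_iff_of_subset hsub).2 ⟨(v, w), by simp [cut, κ', hvw, hvw.ne.symm, hmono w hvw],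
      fun h => h.2 (hmono w hvw).symm⟩
  exact (Set.ncard_lt_ncard hlt (Set.toFinite _)).not_ge (hκ κ')

theorem two_lt_edist_of {V : Type*} {G : SimpleGraph V} {u v : V} (hne : u ≠ v)
    (h : ¬ (G.Adj u v ∨ ∃ w, G.Adj u w ∧ G.Adj w v)) : 2 < G.edist u v := by
  by_contra! hle
  obtain ⟨p, hp⟩ := exists_walk_of_edist_ne_top (ne_top_of_le_ne_top (by simp) hle)
  have hlen : p.length ≤ 2 := by exact_mod_cast hp ▸ hle
  match p, hlen with
  | .nil, _ => exact hne rfl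
  | .cons huv .nil, _ => exact h (.inl huv)
  | .cons huw (.cons hwv .nil), _ => exact h (.inr ⟨_, huw, hwv⟩)
  | .cons _ (.cons _ (.cons _ _)), hlen => simp at hlen

variable {V : Type*} (G : SimpleGraph V)

def triangleGraph : SimpleGraph V where
  Adj u v := G.Adj u v ∧ ∃ w, G.Adj u w ∧ G.Adj v w
  symm := ⟨fun _ _ ⟨h, w, hu, hv⟩ => ⟨h.symm, w, hv, hu⟩⟩
  loopless := ⟨fun _ h => G.irrefl h.1⟩

abbrev cell (v : V) : G.triangleGraph.ConnectedComponent :=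
  G.triangleGraph.connectedComponentMk v

def IsInternal (v : V) : Prop := ∀ w, G.Adj v w → G.cell w = G.cell v

def cellGraph : SimpleGraph G.triangleGraph.ConnectedComponent :=
  fromRel fun c d => ∃ x y, G.Adj x y ∧ G.cell x = c ∧ G.cell y = d

/-- `K₄` minus the edge `p q`: the ports `p`, `q` and the internal vertices `r`, `t`. -/
def IsDiamond (p q r t : V) : Prop :=
  p ≠ q ∧ ¬ G.Adj p q ∧ G.Adj r t ∧ G.Adj p r ∧ G.Adj p t ∧ G.Adj q r ∧ G.Adj q t

variable {G}

theorem cell_eq_of_adj_of_adj {x y z : V} (hxy : G.Adj x y) (hxz : G.Adj x z)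
    (hyz : G.Adj y z) : G.cell x = G.cell y :=
  ConnectedComponent.connectedComponentMk_eq_of_adj ⟨hxy, z, hxz, hyz⟩

theorem mem_of_cell_eq {S : Set V}
    (hS : ∀ x ∈ S, ∀ y z, G.Adj x y → G.Adj x z → G.Adj y z → y ∈ S)
    {v w : V} (hv : v ∈ S) (h : G.cell w = G.cell v) : w ∈ S := by
  obtain ⟨p⟩ := ConnectedComponent.exact h.symm
  clear h
  induction p with
  | nil => exact hv
  | cons hxy _ ih =>
    obtain ⟨hxy, z, hxz, hyz⟩ := hxy
    exact ih (hS _ hv _ z hxy hxz hyz)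

namespace IsDiamond

variable {p q r t : V}

theorem swap_ports (hD : G.IsDiamond p q r t) : G.IsDiamond q p r t := by
  obtain ⟨h1, h2, h3, h4, h5, h6, h7⟩ := hD
  exact ⟨h1.symm, fun h => h2 h.symm, h3, h6, h7, h4, h5⟩

theorem swap_internals (hD : G.IsDiamond p q r t) : G.IsDiamond p q t r := by
  obtain ⟨h1, h2, h3, h4, h5, h6, h7⟩ := hD
  exact ⟨h1, h2, h3.symm, h5, h4, h7, h6⟩

theorem cell_eq (hD : G.IsDiamond p q r t) :
    G.cell p = G.cell r ∧ G.cell q = G.cell r ∧ G.cell t = G.cell r := by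
  obtain ⟨-, -, h3, h4, h5, h6, h7⟩ := hD
  exact ⟨cell_eq_of_adj_of_adj h4 h5 h3, cell_eq_of_adj_of_adj h6 h7 h3,
    cell_eq_of_adj_of_adj h3.symm h5.symm h4.symm⟩

end IsDiamond

section Cubic

variable [Fintype V] [DecidableRel G.Adj] {a b c d p q r t v w y z : V}

theorem triangleGraph_adj_or_adj (hG : IsCubic G) (hG' : ClawFree G) (hy : G.Adj v y)
    (hz : G.Adj v z) (hyz : y ≠ z) : G.triangleGraph.Adj v y ∨ G.triangleGraph.Adj v z := by
  obtain ⟨u, hu, huy, huz⟩ := hG.exists_adj_ne v y z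
  rcases hG'.adj_or_adj_or_adj hy hz hu hyz huy.symm huz.symm with h | h | h
  · exact .inl ⟨hy, z, hz, h⟩
  · exact .inl ⟨hy, u, hu, h⟩
  · exact .inr ⟨hz, u, hu, h⟩

theorem eq_of_cell_ne (hG : IsCubic G) (hG' : ClawFree G) (hy : G.Adj v y) (hz : G.Adj v z)
    (hy' : G.cell y ≠ G.cell v) (hz' : G.cell z ≠ G.cell v) : y = z := by
  by_contra hyz
  rcases triangleGraph_adj_or_adj hG hG' hy hz hyz with h | h
  · exact hy' (ConnectedComponent.connectedComponentMk_eq_of_adj h).symm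
  · exact hz' (ConnectedComponent.connectedComponentMk_eq_of_adj h).symm

theorem mem_of_adj_of_isK4 (hG : IsCubic G) (hab : G.Adj a b) (hac : G.Adj a c)
    (had : G.Adj a d) (hbc : G.Adj b c) (hbd : G.Adj b d) (hcd : G.Adj c d) {x y : V}
    (hx : x ∈ ({a, b, c, d} : Set V)) (hy : G.Adj x y) : y ∈ ({a, b, c, d} : Set V) := by
  rcases hx with rfl | rfl | rfl | rfl
  · rcases hG.eq_or_eq_or_eq hab hac had hbc.ne hbd.ne hcd.ne hy with rfl | rfl | rfl <;> simp
  · rcases hG.eq_or_eq_or_eq hab.symm hbc hbd hac.ne had.ne hcd.ne hy with rfl | rfl | rfl <;> simp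
  · rcases hG.eq_or_eq_or_eq hac.symm hbc.symm hcd hab.ne had.ne hbd.ne hy with rfl | rfl | rfl <;>
      simp
  · rcases hG.eq_or_eq_or_eq had.symm hbd.symm hcd.symm hab.ne hac.ne hbc.ne hy with
      rfl | rfl | rfl <;> simp

namespace IsDiamond

theorem eq_of_adj (hG : IsCubic G) (hD : G.IsDiamond p q r t) (hw : G.Adj r w) :
    w = p ∨ w = q ∨ w = t := by
  obtain ⟨h1, -, h3, h4, h5, h6, h7⟩ := hD
  exact hG.eq_or_eq_or_eq h4.symm h6.symm h3 h1 h5.ne h7.ne hw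

theorem mem_of_cell_eq (hG : IsCubic G) (hD : G.IsDiamond p q r t)
    (hw : G.cell w = G.cell r) : w = p ∨ w = q ∨ w = r ∨ w = t := by
  have hr {y} (hy : G.Adj r y) := hD.eq_of_adj hG hy
  have ht {y} (hy : G.Adj t y) := hD.swap_internals.eq_of_adj hG hy
  have hport {x} (hxr : G.Adj x r) (hxt : G.Adj x t) {y z} (hy : G.Adj x y) (hz : G.Adj x z)
      (hyz : G.Adj y z) : y = p ∨ y = q ∨ y = r ∨ y = t := by
    rcases hG.eq_or_eq_of_adj_of_adj hxr hxt hD.2.2.1.ne hy hz hyz.ne with h | h | h | h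
    · exact .inr (.inr (.inl h))
    · exact .inr (.inr (.inr h))
    · subst h; rcases hr hyz.symm with h | h | h <;> simp [h]
    · subst h; rcases ht hyz.symm with h | h | h <;> simp [h]
  refine SimpleGraph.mem_of_cell_eq (S := {p, q, r, t}) ?_ (by simp) hw
  obtain ⟨-, -, -, hpr, hpt, hqr, hqt⟩ := hD
  rintro x (rfl | rfl | rfl | rfl) y z hy hz hyz
  · exact hport hpr hpt hy hz hyz
  · exact hport hqr hqt hy hz hyz
  · rcases hr hy with h | h | h <;> simp [h]
  · rcases ht hy with h | h | h <;> simp [h]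

theorem isInternal (hG : IsCubic G) (hD : G.IsDiamond p q r t) : G.IsInternal r := by
  intro w hw
  obtain ⟨hp, hq, ht⟩ := hD.cell_eq
  rcases hD.eq_of_adj hG hw with rfl | rfl | rfl <;> assumption

theorem not_isInternal (hG : IsCubic G) (hD : G.IsDiamond p q r t) : ¬ G.IsInternal p := by
  intro hp
  obtain ⟨e, he, her, het⟩ := hG.exists_adj_ne p r t
  rcases hD.mem_of_cell_eq hG ((hp e he).trans hD.cell_eq.1) with rfl | rfl | rfl | rfl
  · exact G.irrefl he
  · exact hD.2.1 he
  · exact her rfl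
  · exact het rfl

end IsDiamond

end Cubic

structure CellMarking (G : SimpleGraph V) where
  color : G.triangleGraph.ConnectedComponent → Bool
  base : G.triangleGraph.ConnectedComponent → V
  mate : G.triangleGraph.ConnectedComponent → V
  cell_base : ∀ c, G.cell (base c) = c
  isInternal_base : ∀ {v}, G.IsInternal v → G.IsInternal (base (G.cell v))
  exists_adj_base : ∀ c, ¬ G.IsInternal (base c) →
    ∃ y, G.Adj (base c) y ∧ color (G.cell y) ≠ color c
  mate_spec : ∀ {v}, G.IsInternal v → v ≠ base (G.cell v) →
    G.IsInternal (mate (G.cell v)) ∧ G.cell (mate (G.cell v)) = G.cell v ∧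
      mate (G.cell v) ≠ base (G.cell v)

theorem exists_cellMarking [Finite V] (G : SimpleGraph V) : Nonempty G.CellMarking := by
  classical
  obtain ⟨κ, hκ⟩ := G.cellGraph.exists_bool_forall_exists_adj_ne
  have hbase (c : G.triangleGraph.ConnectedComponent) : ∃ x, G.cell x = c ∧
      (∀ v, G.cell v = c → G.IsInternal v → G.IsInternal x) ∧
      (¬ G.IsInternal x → ∃ y, G.Adj x y ∧ κ (G.cell y) ≠ κ c) := by
    by_cases h : ∃ v, G.cell v = c ∧ G.IsInternal v
    · obtain ⟨v, hv, hint⟩ := h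
      exact ⟨v, hv, fun _ _ _ => hint, fun h => absurd hint h⟩
    push Not at h
    -- without internal vertices the cell has an outgoing edge, hence a differently coloured
    -- neighbouring cell
    obtain ⟨v, rfl⟩ := c.exists_rep
    obtain ⟨y, hvy, hy⟩ : ∃ y, G.Adj v y ∧ G.cell y ≠ G.cell v := by
      simpa [IsInternal] using h v rfl
    obtain ⟨d, ⟨-, ⟨x, y', hxy, hx, hy'⟩ | ⟨y', x, hyx, hy', hx⟩⟩, hκd⟩ :=
      hκ (G.cell v) (G.cell y) ⟨hy.symm, .inl ⟨v, y, hvy, rfl, rfl⟩⟩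
    · exact ⟨x, hx, fun v hv => (absurd · (h v hv)), fun _ => ⟨y', hxy, hy' ▸ hκd⟩⟩
    · exact ⟨x, hx, fun v hv => (absurd · (h v hv)),
        fun _ => ⟨y', hyx.symm, hy' ▸ hκd⟩⟩
  choose base hbase using hbase
  have hmate (c : G.triangleGraph.ConnectedComponent) : ∃ m, ∀ v, G.cell v = c →
      G.IsInternal v → v ≠ base c → G.IsInternal m ∧ G.cell m = c ∧ m ≠ base c := by
    by_cases h : ∃ m, G.IsInternal m ∧ G.cell m = c ∧ m ≠ base c
    · obtain ⟨m, hm⟩ := h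
      exact ⟨m, fun _ _ _ _ => hm⟩
    · exact ⟨base c, fun v hv hint hne => absurd ⟨v, hint, hv, hne⟩ h⟩
  choose mate hmate using hmate
  exact ⟨{ color := κ, base, mate
           cell_base := fun c => (hbase c).1
           isInternal_base := fun hv => (hbase _).2.1 _ rfl hv
           exists_adj_base := fun c => (hbase c).2.2
           mate_spec := fun hv hne => hmate _ _ rfl hv hne }⟩

namespace CellMarking

variable (M : G.CellMarking)

def Pointed (c : G.triangleGraph.ConnectedComponent) : Prop :=
  ∃ x y, G.cell x = c ∧ G.Adj x y ∧ G.cell y ≠ c ∧ y = M.base (G.cell y)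

/-- `some i` puts a vertex into the `i`-th 2-packing; `none` leaves it to the independent sets. -/
noncomputable def mark (v : V) : Option Bool :=
  open Classical in
  if v = M.base (G.cell v) then some (M.color (G.cell v))
  else if G.IsInternal v ∧ v = M.mate (G.cell v) ∧ ¬ M.Pointed (G.cell v) then
    some (!M.color (G.cell v))
  else none

def unmarkedGraph : SimpleGraph V where
  Adj u v := G.Adj u v ∧ M.mark u = none ∧ M.mark v = none
  symm := ⟨fun _ _ ⟨h, hu, hv⟩ => ⟨h.symm, hv, hu⟩⟩
  loopless := ⟨fun _ h => G.irrefl h.1⟩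

variable {M}

theorem mark_ne_none_of_eq_base {x : V} {c : G.triangleGraph.ConnectedComponent}
    (h : x = M.base c) : M.mark x ≠ none := by
  simp [h, mark, M.cell_base]

theorem mark_eq_some {v : V} {i : Bool} (h : M.mark v = some i) :
    (v = M.base (G.cell v) ∧ i = M.color (G.cell v)) ∨
      (G.IsInternal v ∧ v = M.mate (G.cell v) ∧ ¬ M.Pointed (G.cell v) ∧
        i = !M.color (G.cell v)) := by
  unfold mark at h
  split_ifs at h with h1 h2
  · exact .inl ⟨h1, (Option.some.inj h).symm⟩
  · exact .inr ⟨h2.1, h2.2.1, h2.2.2, (Option.some.inj h).symm⟩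

theorem pointed_of_mark_eq_none {v : V} (hv : G.IsInternal v) (hmate : v = M.mate (G.cell v))
    (h : M.mark v = none) : M.Pointed (G.cell v) := by
  unfold mark at h
  split_ifs at h with h1 h2
  by_contra hp
  exact h2 ⟨hv, hmate, hp⟩

theorem not_pointed {c : G.triangleGraph.ConnectedComponent}
    (h : ∀ x, G.cell x = c → G.IsInternal x) : ¬ M.Pointed c := by
  rintro ⟨x, y, rfl, hxy, hy, -⟩
  exact hy (h x rfl y hxy)

section Cubic

variable [Fintype V] [DecidableRel G.Adj] {a b c d p q r t u v w : V} {i : Bool}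

theorem color_ne_of_adj (hG : IsCubic G) (hG' : ClawFree G) (hv : v = M.base (G.cell v))
    (hint : ¬ G.IsInternal v) (hvw : G.Adj v w) (hw : G.cell w ≠ G.cell v) :
    M.color (G.cell w) ≠ M.color (G.cell v) := by
  obtain ⟨y, hy, hne⟩ := M.exists_adj_base (G.cell v) (hv ▸ hint)
  rw [← hv] at hy
  have hy' : G.cell y ≠ G.cell v := fun h => hne (by rw [h])
  rwa [eq_of_cell_ne hG hG' hvw hy hw hy']

theorem false_of_mark_eq_of_isInternal (hG : IsCubic G) (hG' : ClawFree G) (hu : M.mark u = some i)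
    (hv : M.mark v = some i) (hcell : G.cell u ≠ G.cell v) (huint : G.IsInternal u)
    (hnear : G.Adj u v ∨ ∃ w, G.Adj u w ∧ G.Adj w v) : False := by
  obtain ⟨x, hx, hxv⟩ : ∃ x, G.cell x = G.cell u ∧ G.Adj x v := by
    rcases hnear with h | ⟨w, huw, hwv⟩
    · exact ⟨u, rfl, h⟩
    · exact ⟨w, huint w huw, hwv⟩
  have hvx : G.cell v ≠ G.cell x := hx ▸ hcell.symm
  have hvint : ¬ G.IsInternal v := fun h => hvx (h x hxv.symm).symm
  obtain ⟨hvbase, hvi⟩ : v = M.base (G.cell v) ∧ i = M.color (G.cell v) :=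
    (mark_eq_some hv).resolve_right fun h => hvint h.1
  have hpointed : M.Pointed (G.cell u) := ⟨x, v, hx, hxv, hx ▸ hvx, hvbase⟩
  obtain ⟨-, hui⟩ : u = M.base (G.cell u) ∧ i = M.color (G.cell u) :=
    (mark_eq_some hu).resolve_right fun h => h.2.2.1 hpointed
  exact color_ne_of_adj hG hG' hvbase hvint hxv.symm (hx ▸ hvx.symm) (by rw [hx, ← hui, hvi])

theorem two_lt_edist_of_mark_eq (hG : IsCubic G) (hG' : ClawFree G) (hu : M.mark u = some i)
    (hv : M.mark v = some i) (hne : u ≠ v) : 2 < G.edist u v := by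
  refine two_lt_edist_of hne fun hnear => ?_
  by_cases hcell : G.cell u = G.cell v
  · rcases mark_eq_some hu with ⟨hu1, hu2⟩ | ⟨-, hu1, -, hu2⟩ <;>
      rcases mark_eq_some hv with ⟨hv1, hv2⟩ | ⟨-, hv1, -, hv2⟩
    · exact hne (by rw [hu1, hv1, hcell])
    · rw [hcell] at hu2; simp [hu2] at hv2
    · rw [hcell] at hu2; simp [hv2] at hu2
    · exact hne (by rw [hu1, hv1, hcell])
  by_cases huint : G.IsInternal u
  · exact false_of_mark_eq_of_isInternal hG hG' hu hv hcell huint hnear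
  by_cases hvint : G.IsInternal v
  · refine false_of_mark_eq_of_isInternal hG hG' hv hu (Ne.symm hcell) hvint ?_
    rcases hnear with h | ⟨w, huw, hwv⟩
    · exact .inl h.symm
    · exact .inr ⟨w, hwv.symm, huw.symm⟩
  obtain ⟨hu1, hu2⟩ := (mark_eq_some hu).resolve_right fun h => huint h.1
  obtain ⟨hv1, hv2⟩ := (mark_eq_some hv).resolve_right fun h => hvint h.1
  rcases hnear with h | ⟨w, huw, hwv⟩
  · exact color_ne_of_adj hG hG' hu1 huint h (Ne.symm hcell) (by rw [← hu2, ← hv2])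
  by_cases hwu : G.cell w = G.cell u
  · exact color_ne_of_adj hG hG' hv1 hvint hwv.symm (hwu ▸ hcell) (by rw [hwu, ← hu2, ← hv2])
  by_cases hwv' : G.cell w = G.cell v
  · exact color_ne_of_adj hG hG' hu1 huint huw (hwv' ▸ Ne.symm hcell)
      (by rw [hwv', ← hu2, ← hv2])
  exact hne (eq_of_cell_ne hG hG' huw.symm hwv (Ne.symm hwu) (Ne.symm hwv'))

theorem mark_ne_none_of_isK4 (hG : IsCubic G) (hab : G.Adj a b) (hac : G.Adj a c)
    (had : G.Adj a d) (hbc : G.Adj b c) (hbd : G.Adj b d) (hcd : G.Adj c d) :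
    M.mark a ≠ none ∨ M.mark b ≠ none ∨ M.mark c ≠ none := by
  have hadj {x y} := mem_of_adj_of_isK4 hG hab hac had hbc hbd hcd (x := x) (y := y)
  have hmem {x} (hx : G.cell x = G.cell a) : x ∈ ({a, b, c, d} : Set V) :=
    mem_of_cell_eq (fun _ hx _ _ hy _ _ => hadj hx hy) (by simp) hx
  have hcell : ∀ x ∈ ({a, b, c, d} : Set V), G.cell x = G.cell a := by
    rintro x (rfl | rfl | rfl | rfl)
    · rfl
    · exact (cell_eq_of_adj_of_adj hab hac hbc).symm
    · exact (cell_eq_of_adj_of_adj hac hab hbc.symm).symm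
    · exact (cell_eq_of_adj_of_adj had hab hbd.symm).symm
  have hint {x} (hx : G.cell x = G.cell a) : G.IsInternal x := fun y hy =>
    (hcell y (hadj (hmem hx) hy)).trans hx.symm
  rcases hmem (M.cell_base (G.cell a)) with h | h | h | h
  · exact .inl (mark_ne_none_of_eq_base h.symm)
  · exact .inr (.inl (mark_ne_none_of_eq_base h.symm))
  · exact .inr (.inr (mark_ne_none_of_eq_base h.symm))
  obtain ⟨hmint, hmcell, hmne⟩ := M.mate_spec (hint rfl) (h ▸ had.ne)
  have hm : M.mark (M.mate (G.cell a)) ≠ none := fun hnone => by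
    have hp := pointed_of_mark_eq_none (v := M.mate (G.cell a)) hmint (by rw [hmcell]) hnone
    rw [hmcell] at hp
    exact M.not_pointed (fun _ => hint) hp
  rcases hmem hmcell with h' | h' | h' | h'
  · exact .inl (h' ▸ hm)
  · exact .inr (.inl (h' ▸ hm))
  · exact .inr (.inr (h' ▸ hm))
  · exact absurd (h'.trans h.symm) hmne

theorem mark_ne_none_of_isDiamond (hG : IsCubic G) (hD : G.IsDiamond p q r t) :
    M.mark r ≠ none ∨ M.mark t ≠ none := by
  have hbase := M.isInternal_base (hD.isInternal hG)
  rcases hD.mem_of_cell_eq hG (M.cell_base (G.cell r)) with h | h | h | h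
  · exact absurd (h ▸ hbase) (hD.not_isInternal hG)
  · exact absurd (h ▸ hbase) (hD.swap_ports.not_isInternal hG)
  · exact .inl (mark_ne_none_of_eq_base h.symm)
  · exact .inr (mark_ne_none_of_eq_base h.symm)

theorem mark_ne_none_of_isolated_triangle (hG : IsCubic G) (hab : G.Adj a b) (hac : G.Adj a c)
    (hbc : G.Adj b c) (hc : ∀ w, G.Adj w a → G.Adj w b → w = c)
    (hb : ∀ w, G.Adj w a → G.Adj w c → w = b)
    (ha : ∀ w, G.Adj w b → G.Adj w c → w = a) :
    M.mark a ≠ none ∨ M.mark b ≠ none ∨ M.mark c ≠ none := by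
  have hmem : M.base (G.cell a) ∈ ({a, b, c} : Set V) := by
    refine mem_of_cell_eq ?_ (by simp) (M.cell_base (G.cell a))
    rintro x (rfl | rfl | rfl) y z hy hz hyz
    · rcases hG.eq_or_eq_of_adj_of_adj hab hac hbc.ne hy hz hyz.ne with rfl | rfl | rfl | rfl
      · simp
      · simp
      · simp [hc y hy.symm hyz]
      · simp [hb y hy.symm hyz]
    · rcases hG.eq_or_eq_of_adj_of_adj hab.symm hbc hac.ne hy hz hyz.ne with rfl | rfl | rfl | rfl
      · simp
      · simp
      · simp [hc y hyz hy.symm]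
      · simp [ha y hy.symm hyz]
    · rcases hG.eq_or_eq_of_adj_of_adj hac.symm hbc.symm hab.ne hy hz hyz.ne with
        rfl | rfl | rfl | rfl
      · simp
      · simp
      · simp [hb y hyz hy.symm]
      · simp [ha y hyz hy.symm]
  rcases hmem with h | h | h
  · exact .inl (mark_ne_none_of_eq_base h.symm)
  · exact .inr (.inl (mark_ne_none_of_eq_base h.symm))
  · exact .inr (.inr (mark_ne_none_of_eq_base h.symm))

theorem mark_ne_none_of_triangle (hG : IsCubic G) (hab : G.Adj a b) (hac : G.Adj a c)
    (hbc : G.Adj b c) : M.mark a ≠ none ∨ M.mark b ≠ none ∨ M.mark c ≠ none := by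
  have key {a b c d : V} (hab : G.Adj a b) (hac : G.Adj a c) (hbc : G.Adj b c) (hdc : d ≠ c)
      (hda : G.Adj d a) (hdb : G.Adj d b) :
      M.mark a ≠ none ∨ M.mark b ≠ none ∨ M.mark c ≠ none := by
    by_cases hcd : G.Adj c d
    · exact mark_ne_none_of_isK4 hG hab hac hda.symm hbc hdb.symm hcd
    · have := mark_ne_none_of_isDiamond (M := M) hG
        (⟨hdc.symm, hcd, hab, hac.symm, hbc.symm, hda, hdb⟩ : G.IsDiamond c d a b)
      tauto
  by_cases h₁ : ∃ d, d ≠ c ∧ G.Adj d a ∧ G.Adj d b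
  · obtain ⟨d, hdc, hda, hdb⟩ := h₁
    exact key hab hac hbc hdc hda hdb
  by_cases h₂ : ∃ d, d ≠ b ∧ G.Adj d a ∧ G.Adj d c
  · obtain ⟨d, hdb, hda, hdc⟩ := h₂
    have := key hac hab hbc.symm hdb hda hdc
    tauto
  by_cases h₃ : ∃ d, d ≠ a ∧ G.Adj d b ∧ G.Adj d c
  · obtain ⟨d, hda, hdb, hdc⟩ := h₃
    have := key hbc hab.symm hac.symm hda hdb hdc
    tauto
  push Not at h₁ h₂ h₃
  exact mark_ne_none_of_isolated_triangle hG hab hac hbc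
    (fun w hwa hwb => by_contra fun h => h₁ w h hwa hwb)
    (fun w hwa hwc => by_contra fun h => h₂ w h hwa hwc)
    (fun w hwb hwc => by_contra fun h => h₃ w h hwb hwc)

theorem false_of_isDiamond (hG : IsCubic G) (hD : G.IsDiamond p q r t) (hr : M.mark r = none)
    (hp : ∃ w, G.Adj p w ∧ w ≠ r ∧ M.mark w = none)
    (hq : ∃ w, G.Adj q w ∧ w ≠ r ∧ M.mark w = none) : False := by
  have hrint := hD.isInternal hG
  have htint := hD.swap_internals.isInternal hG
  have hrt : r ≠ t := hD.2.2.1.ne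
  have hbase : M.base (G.cell r) = t := by
    rcases hD.mem_of_cell_eq hG (M.cell_base (G.cell r)) with h | h | h | h
    · exact absurd (h ▸ M.isInternal_base hrint) (hD.not_isInternal hG)
    · exact absurd (h ▸ M.isInternal_base hrint) (hD.swap_ports.not_isInternal hG)
    · exact absurd hr (mark_ne_none_of_eq_base h.symm)
    · exact h
  obtain ⟨hmint, hmcell, hmne⟩ := M.mate_spec hrint (hbase ▸ hrt)
  have hmate : M.mate (G.cell r) = r := by
    rcases hD.mem_of_cell_eq hG hmcell with h | h | h | h
    · exact absurd (h ▸ hmint) (hD.not_isInternal hG)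
    · exact absurd (h ▸ hmint) (hD.swap_ports.not_isInternal hG)
    · exact h
    · exact absurd (h.trans hbase.symm) hmne
  -- `r` is unmarked only because a base `y` of another cell is adjacent to a port `x`
  obtain ⟨x, y, hx, hxy, hy, hybase⟩ := pointed_of_mark_eq_none hrint hmate.symm hr
  have hport {x} (hxr : G.Adj x r) (hxt : G.Adj x t) (hxy : G.Adj x y) {w} (hw : G.Adj x w)
      (hwr : w ≠ r) : M.mark w ≠ none := by
    have hyr : y ≠ r := fun h => hy (h ▸ rfl)
    have hyt : y ≠ t := fun h => hy (h ▸ hD.cell_eq.2.2)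
    rcases hG.eq_or_eq_or_eq hxr hxt hxy hrt hyr.symm hyt.symm hw with rfl | rfl | rfl
    · exact absurd rfl hwr
    · exact mark_ne_none_of_eq_base hbase.symm
    · exact mark_ne_none_of_eq_base hybase
  have htcell := hD.cell_eq.2.2
  have hxS := hD.mem_of_cell_eq hG hx
  obtain ⟨-, -, -, hpr, hpt, hqr, hqt⟩ := hD
  rcases hxS with rfl | rfl | rfl | rfl
  · obtain ⟨w, hw, hwr, hwA⟩ := hp
    exact hport hpr hpt hxy hw hwr hwA
  · obtain ⟨w, hw, hwr, hwA⟩ := hq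
    exact hport hqr hqt hxy hw hwr hwA
  · exact hy (hrint y hxy)
  · exact hy ((htint y hxy).trans htcell)

theorem isAlternatingOffLeaves_unmarkedGraph (hG : IsCubic G) (hG' : ClawFree G) :
    M.unmarkedGraph.IsAlternatingOffLeaves G.triangleGraph.Adj := by
  intro x y z hxy hyz hxz hx hz
  refine ⟨fun hTxy hTyz => ?_, fun hT => ?_⟩
  · obtain ⟨u, hu, hux, huz⟩ := hG.exists_adj_ne y x z
    have hcommon {v} (hv : G.Adj y v) (hvx : v ≠ x) (hvz : v ≠ z) : v = u :=
      (hG.eq_or_eq_or_eq hxy.1.symm hyz.1 hu hxz hux.symm huz.symm hv).resolve_left hvx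
        |>.resolve_left hvz
    by_cases hxz' : G.Adj x z
    · rcases mark_ne_none_of_triangle (M := M) hG hxy.1 hxz' hyz.1 with h | h | h
      · exact h hxy.2.1
      · exact h hxy.2.2
      · exact h hyz.2.2
    -- otherwise `x` and `z` are the ports of a diamond with internal vertices `y` and `u`
    obtain ⟨v, hxv, hyv⟩ := hTxy.2
    obtain ⟨v', hyv', hzv'⟩ := hTyz.2
    obtain rfl := hcommon hyv (fun h => G.irrefl (h ▸ hxv)) fun h => hxz' (h ▸ hxv)
    obtain rfl := hcommon hyv' (fun h => hxz' (h ▸ hzv'.symm)) fun h => G.irrefl (h ▸ hzv')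
    obtain ⟨w, hwx, hwy⟩ := hx
    obtain ⟨w', hzw', hw'y⟩ := hz
    exact false_of_isDiamond hG ⟨hxz, hxz', hu, hxy.1, hxv, hyz.1.symm, hzv'⟩ hxy.2.2
      ⟨w, hwx.1.symm, hwy, hwx.2.1⟩ ⟨w', hzw'.1, hw'y, hzw'.2.2⟩
  · exact ((triangleGraph_adj_or_adj hG hG' hxy.1.symm hyz.1 hxz).resolve_right hT).symm

end Cubic

end CellMarking

end SimpleGraph

theorem exists_packing_partition {V : Type*} {G : SimpleGraph V} (b : V → Option Bool)
    (φ : V → Fin 2) (hA : ∀ u v, G.Adj u v → b u = none → b v = none → φ u ≠ φ v)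
    (hB : ∀ u v i, b u = some i → b v = some i → u ≠ v → 2 < G.edist u v) :
    ∃ A₁ A₂ B₁ B₂ : Set V,
      A₁ ∪ A₂ ∪ B₁ ∪ B₂ = Set.univ ∧
      ([A₁, A₂, B₁, B₂] : List (Set V)).Pairwise Disjoint ∧
      IndepSet G A₁ ∧ IndepSet G A₂ ∧ TwoPacking G B₁ ∧ TwoPacking G B₂ := by
  refine ⟨{v | b v = none ∧ φ v = 0}, {v | b v = none ∧ φ v = 1}, {v | b v = some false},
    {v | b v = some true}, ?_, ?_,
    fun u hu v hv huv => hA u v huv hu.1 hv.1 (hu.2.trans hv.2.symm),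
    fun u hu v hv huv => hA u v huv hu.1 hv.1 (hu.2.trans hv.2.symm),
    fun u hu v hv => hB u v _ hu hv, fun u hu v hv => hB u v _ hu hv⟩
  · refine Set.eq_univ_of_forall fun v => ?_
    obtain h | h : φ v = 0 ∨ φ v = 1 := by omega
    all_goals rcases hb : b v with _ | _ | _ <;> simp [h, hb]
  · simp +contextual [List.pairwise_cons, Set.disjoint_left]

theorem stmt_2 {V : Type*} [Fintype V] (G : SimpleGraph V) [DecidableRel G.Adj]
    (hcubic : IsCubic G) (hclaw : ClawFree G) :
    ∃ A₁ A₂ B₁ B₂ : Set V,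
      A₁ ∪ A₂ ∪ B₁ ∪ B₂ = Set.univ ∧
      ([A₁, A₂, B₁, B₂] : List (Set V)).Pairwise Disjoint ∧
      IndepSet G A₁ ∧ IndepSet G A₂ ∧ TwoPacking G B₁ ∧ TwoPacking G B₂ := by
  obtain ⟨M⟩ := G.exists_cellMarking
  obtain ⟨C⟩ := (M.isAlternatingOffLeaves_unmarkedGraph hcubic hclaw).colorable_two
  exact exists_packing_partition M.mark C (fun u v huv hu hv => C.valid ⟨huv, hu, hv⟩)
    fun u v i hu hv => M.two_lt_edist_of_mark_eq hcubic hclaw hu hv
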